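/- Entropic uncertainty principle for weighted quantum partitions: Let ℋ be a complex Hilbert space, let ρ = {ρ_i}_{i∈I} and τ = {τ_j}_{j∈J} be two finite families of bounded operators on ℋ satisfying ∑_{i∈I} ρ_i* ρ_i = Id and ∑_{j∈J} τ_j* τ_j = Id, and let v = {v_i > 0}_{i∈I}, w = {w_j > 0}_{j∈J} be families of positive weights. Then for every unit vector ψ ∈ ℋ, the pressures p(ψ,ρ,v) = ∑_{i∈I} η(‖ρ_i ψ‖²) − 2 ∑_{i∈I} ‖ρ_i ψ‖² log v_i and p(ψ,τ,w) = ∑_{j∈J} η(‖τ_j ψ‖²) − 2 ∑_{j∈J} ‖τ_j ψ‖² log w_j satisfy p(ψ,ρ,v) + p(ψ,τ,w) ≥ −2·log( max_{i∈I, j∈J} v_i w_j ‖τ_j ρ_i*‖ ). -/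

import Mathlib

open scoped InnerProductSpace

/-- The entropy function `η(s) = -s·log s` (with `η(0) = 0`, since `Real.log 0 = 0`). -/
noncomputable def eta (s : ℝ) : ℝ := -s * Real.log s

/-!
Put `p i = ‖ρ i ψ‖²`, `q j = ‖τ j ψ‖²`, `s i = log (p i * v i ^ 2)` and `σ j = log (q j * w j ^ 2)`,
so that the two pressures are `-∑ p s` and `-∑ q σ`, and let `c` be the supremum in the statement.
The matrix `K i j = ⟪τ j ψ, τ j (ρ i)† ρ i ψ⟫` has column sums `q`, is a contraction between the
`p`- and `q`-weighted `ℓ²` spaces, and has entries bounded by `c √(p i) √(q j) / (v i w j)`.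
Interpolating between the last two bounds with Hadamard's three lines theorem (as in the
Riesz–Thorin theorem) gives, for `0 < t < 1`, `(1 - t) log Q(t) - (1 + t) log A(-t) ≤ 2 t log c`,
where `Q(t) = ∑ q j exp (t σ j / (1 - t))` and `A` is built in the same way from `p` and `s`.
Both sides vanish at `t = 0`, and comparing their derivatives there gives
`∑ p s + ∑ q σ ≤ 2 log c`.
-/

open Finset Real Filter Topology ContinuousLinearMap

noncomputable def tiltSum {ι : Type*} [Fintype ι] (r s : ι → ℝ) (t : ℝ) : ℝ :=
  ∑ i, r i * exp (t * s i / (1 - t))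

section TiltSum

variable {ι : Type*} [Fintype ι] (r s : ι → ℝ)

lemma tiltSum_zero : tiltSum r s 0 = ∑ i, r i := by
  simp [tiltSum]

lemma tiltSum_pos {r : ι → ℝ} (hr : ∀ i, 0 ≤ r i) (hsum : ∑ i, r i = 1) (t : ℝ) :
    0 < tiltSum r s t := by
  obtain ⟨i, -, hi⟩ : ∃ i ∈ univ, (0 : ι → ℝ) i < r i :=
    exists_lt_of_sum_lt (by simp only [Pi.zero_apply, sum_const_zero, hsum, zero_lt_one])
  exact sum_pos' (fun j _ => mul_nonneg (hr j) (exp_pos _).le)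
    ⟨i, mem_univ i, mul_pos hi (exp_pos _)⟩

lemma hasDerivAt_tiltSum : HasDerivAt (tiltSum r s) (∑ i, r i * s i) 0 := by
  have hexp (x : ℝ) : HasDerivAt (fun t => exp (t * x / (1 - t))) x 0 := by
    have h := ((hasDerivAt_mul_const x).div ((hasDerivAt_id 0).const_sub 1) (by norm_num)).exp
    simpa using h
  exact HasDerivAt.fun_sum fun i _ => (hexp (s i)).const_mul (r i)

lemma hasDerivAt_one_sub_mul_log_tiltSum {r : ι → ℝ} (hsum : ∑ i, r i = 1) :
    HasDerivAt (fun t => (1 - t) * log (tiltSum r s t)) (∑ i, r i * s i) 0 := by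
  have h0 : tiltSum r s 0 = 1 := by rw [tiltSum_zero, hsum]
  have h := ((hasDerivAt_id 0).const_sub 1).fun_mul ((hasDerivAt_tiltSum r s).log (by simp [h0]))
  simpa [h0] using h

end TiltSum

lemma le_of_hasDerivAt_of_le_mul {f : ℝ → ℝ} {d C : ℝ} (hf : HasDerivAt f d 0) (h0 : f 0 = 0)
    (hle : ∀ t ∈ Set.Ioo 0 1, f t ≤ t * C) : d ≤ C := by
  have hslope : Tendsto (fun t => f t / t) (𝓝[>] 0) (𝓝 d) := by
    refine ((hasDerivAt_iff_tendsto_slope.mp hf).mono_left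
      (nhdsWithin_mono 0 fun t ht => ne_of_gt ht)).congr' ?_
    filter_upwards with t
    simp [slope_def_field, h0]
  refine le_of_tendsto hslope ?_
  filter_upwards [Ioo_mem_nhdsGT one_pos] with t ht
  exact (div_le_iff₀ ht.1).mpr (by linarith [hle t ht])

lemma one_sub_mul_log_sub_one_add_mul_log_le {Q A c θ : ℝ} (hQ : 0 < Q) (hA : 0 < A) (hc : 0 ≤ c)
    (hθ : 0 < θ) (h : Q ≤ (√Q * √A) ^ (1 - θ) * (c * A * Q) ^ θ) :
    (1 - θ) * log Q - (1 + θ) * log A ≤ 2 * θ * log c := by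
  have hc : 0 < c := by
    refine hc.lt_of_ne fun hc0 => ?_
    rw [← hc0, zero_mul, zero_mul, zero_rpow hθ.ne', mul_zero] at h
    exact h.not_gt hQ
  have hlog := log_le_log hQ h
  rw [log_mul (by positivity) (by positivity), log_rpow (by positivity), log_rpow (by positivity),
    log_mul (by positivity) (by positivity), log_sqrt hQ.le, log_sqrt hA.le,
    log_mul (by positivity) hQ.ne', log_mul hc.ne' hA.ne'] at hlog
  linarith

open Complex.HadamardThreeLines in
lemma norm_cexp_ofReal_mul_add_le {z : ℂ} (hz : z ∈ verticalClosedStrip 0 1) (x y : ℝ) :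
    ‖Complex.exp (x * z + y)‖ ≤ exp (|x| + |y|) := by
  have hz : 0 ≤ z.re ∧ z.re ≤ 1 := hz
  rw [Complex.norm_exp, exp_le_exp]
  simp only [Complex.add_re, Complex.re_ofReal_mul, Complex.ofReal_re]
  nlinarith [abs_nonneg x, le_abs_self x, le_abs_self y]

open Complex.HadamardThreeLines in
lemma bddAbove_norm_sum_sum_cexp_mul {I J : Type*} [Fintype I] [Fintype J] (α α' : I → ℝ)
    (β β' : J → ℝ) (K : I → J → ℂ) :
    BddAbove ((norm ∘ fun z => ∑ i, ∑ j, Complex.exp (α i * z + α' i) *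
      Complex.exp (β j * z + β' j) * K i j) '' verticalClosedStrip 0 1) := by
  refine ⟨∑ i, ∑ j, exp (|α i| + |α' i|) * exp (|β j| + |β' j|) * ‖K i j‖, ?_⟩
  rintro _ ⟨z, hz, rfl⟩
  refine (norm_sum_le _ _).trans (sum_le_sum fun i _ => (norm_sum_le _ _).trans
    (sum_le_sum fun j _ => ?_))
  rw [norm_mul, norm_mul]
  gcongr
  · exact norm_cexp_ofReal_mul_add_le hz _ _
  · exact norm_cexp_ofReal_mul_add_le hz _ _

lemma norm_sum_sum_mul_le {I J : Type*} [Fintype I] [Fintype J] {K : I → J → ℂ} {c : ℝ}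
    {P : I → ℝ} {Q : J → ℝ} (hK : ∀ i j, ‖K i j‖ ≤ c * P i * Q j) (a : I → ℂ) (b : J → ℂ) :
    ‖∑ i, ∑ j, a i * b j * K i j‖ ≤ c * (∑ i, ‖a i‖ * P i) * (∑ j, ‖b j‖ * Q j) :=
  calc ‖∑ i, ∑ j, a i * b j * K i j‖ ≤ ∑ i, ∑ j, ‖a i‖ * ‖b j‖ * ‖K i j‖ := by
        refine (norm_sum_le _ _).trans (sum_le_sum fun i _ => (norm_sum_le _ _).trans_eq ?_)
        simp only [norm_mul]
    _ ≤ ∑ i, ∑ j, ‖a i‖ * ‖b j‖ * (c * P i * Q j) := by gcongr with i _ j _; exact hK i j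
    _ = c * (∑ i, ‖a i‖ * P i) * (∑ j, ‖b j‖ * Q j) := by
        rw [mul_assoc, sum_mul_sum]
        simp only [mul_sum]
        exact sum_congr rfl fun i _ => sum_congr rfl fun j _ => by ring

open Complex.HadamardThreeLines in
theorem tiltSum_le_three_lines {I J : Type*} [Fintype I] [Fintype J] (K : I → J → ℂ)
    (p s : I → ℝ) (q σ : J → ℝ) {c θ : ℝ} (hθ0 : 0 ≤ θ) (hθ1 : θ < 1)
    (hcol : ∀ j, ∑ i, K i j = q j)
    (hL2 : ∀ (a : I → ℂ) (b : J → ℂ), ‖∑ i, ∑ j, a i * b j * K i j‖ ≤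
      √(∑ i, ‖a i‖ ^ 2 * p i) * √(∑ j, ‖b j‖ ^ 2 * q j))
    (hL1 : ∀ i j, ‖K i j‖ ≤ c * (p i * exp (-(s i / 2))) * (q j * exp (-(σ j / 2)))) :
    tiltSum q σ θ ≤ (√(tiltSum q σ θ) * √(tiltSum p s (-θ))) ^ (1 - θ) *
      (c * tiltSum p s (-θ) * tiltSum q σ θ) ^ θ := by
  have h1θ : 1 - θ ≠ 0 := by linarith
  have h1θ' : 1 + θ ≠ 0 := by linarith
  -- `a` and `b` are normalised so that `a i θ = 1` and so that on the lines `re z = 0` and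
  -- `re z = 1` the bounds `hL2` and `hL1` become exactly the two factors of the conclusion.
  set α : I → ℝ := fun i => s i / (2 * (1 + θ))
  set β : J → ℝ := fun j => σ j / (2 * (1 - θ))
  set a : I → ℂ → ℂ := fun i z => Complex.exp (α i * z + ↑(-(α i * θ)))
  set b : J → ℂ → ℂ := fun j z => Complex.exp (β j * z + ↑(β j * θ))
  set F : ℂ → ℂ := fun z => ∑ i, ∑ j, a i z * b j z * K i j
  have hnorm_a (i : I) (z : ℂ) : ‖a i z‖ = exp (α i * z.re - α i * θ) := by
    simp [a, Complex.norm_exp, sub_eq_add_neg]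
  have hnorm_b (j : J) (z : ℂ) : ‖b j z‖ = exp (β j * z.re + β j * θ) := by
    simp [b, Complex.norm_exp]
  have hdiff : Differentiable ℂ F := by fun_prop
  have hbdd : BddAbove ((norm ∘ F) '' verticalClosedStrip 0 1) :=
    bddAbove_norm_sum_sum_cexp_mul α (fun i => -(α i * θ)) β (fun j => β j * θ) K
  have hre0 : ∀ z ∈ Complex.re ⁻¹' {0}, ‖F z‖ ≤ √(tiltSum q σ θ) * √(tiltSum p s (-θ)) := by
    intro z (hz : z.re = 0)
    refine (hL2 _ _).trans_eq ?_
    rw [mul_comm]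
    congr 2 <;> refine sum_congr rfl fun k _ => ?_
    · rw [hnorm_b, hz, ← exp_nat_mul, mul_comm]
      congr 2; simp only [β]; field_simp; ring
    · rw [hnorm_a, hz, ← exp_nat_mul, mul_comm]
      congr 2; simp only [α, sub_neg_eq_add]; field_simp; ring
  have hre1 : ∀ z ∈ Complex.re ⁻¹' {1},
      ‖F z‖ ≤ c * tiltSum p s (-θ) * tiltSum q σ θ := by
    intro z (hz : z.re = 1)
    refine (norm_sum_sum_mul_le (P := fun i => p i * exp (-(s i / 2)))
      (Q := fun j => q j * exp (-(σ j / 2))) hL1 _ _).trans_eq ?_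
    rw [tiltSum, tiltSum]
    congr 1
    · congr 1
      refine sum_congr rfl fun i _ => ?_
      rw [hnorm_a, hz, mul_left_comm, ← exp_add]
      congr 2; simp only [α, sub_neg_eq_add]; field_simp; ring
    · refine sum_congr rfl fun j _ => ?_
      rw [hnorm_b, hz, mul_left_comm, ← exp_add]
      congr 2; simp only [β]; field_simp; ring
  have hF : F θ = tiltSum q σ θ := by
    have ha (i : I) : a i θ = 1 := by simp [a]
    have hb (j : J) : b j θ = exp (θ * σ j / (1 - θ)) := by
      simp only [b, β]; rw [Complex.ofReal_exp]; congr 1; push_cast; field_simp; ring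
    simp only [F, ha, one_mul]
    rw [sum_comm]
    simp only [← mul_sum, hcol, hb, tiltSum]
    push_cast
    exact sum_congr rfl fun j _ => mul_comm _ _
  have h3 := norm_le_interp_of_mem_verticalClosedStrip₀₁' F (z := θ) ⟨hθ0, hθ1.le⟩
    hdiff.diffContOnCl hbdd hre0 hre1
  rw [hF, Complex.ofReal_re, Complex.norm_real, Real.norm_eq_abs] at h3
  exact (le_abs_self _).trans h3

theorem sum_mul_add_sum_mul_le_two_mul_log {I J : Type*} [Fintype I] [Fintype J] (K : I → J → ℂ)
    (p s : I → ℝ) (q σ : J → ℝ) {c : ℝ} (hp0 : ∀ i, 0 ≤ p i) (hq0 : ∀ j, 0 ≤ q j)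
    (hp : ∑ i, p i = 1) (hq : ∑ j, q j = 1) (hc : 0 ≤ c)
    (hcol : ∀ j, ∑ i, K i j = q j)
    (hL2 : ∀ (a : I → ℂ) (b : J → ℂ), ‖∑ i, ∑ j, a i * b j * K i j‖ ≤
      √(∑ i, ‖a i‖ ^ 2 * p i) * √(∑ j, ‖b j‖ ^ 2 * q j))
    (hL1 : ∀ i j, ‖K i j‖ ≤ c * (p i * exp (-(s i / 2))) * (q j * exp (-(σ j / 2)))) :
    ∑ i, p i * s i + ∑ j, q j * σ j ≤ 2 * log c := by
  have hkey : ∀ t ∈ Set.Ioo (0 : ℝ) 1, (1 - t) * log (tiltSum q σ t) -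
      (1 - -t) * log (tiltSum p s (-t)) ≤ t * (2 * log c) := fun t ht => by
    have := one_sub_mul_log_sub_one_add_mul_log_le (tiltSum_pos σ hq0 hq t)
      (tiltSum_pos s hp0 hp (-t)) hc ht.1
      (tiltSum_le_three_lines K p s q σ ht.1.le ht.2 hcol hL2 hL1)
    linarith
  have hderiv := (hasDerivAt_one_sub_mul_log_tiltSum σ hq).sub
    ((hasDerivAt_one_sub_mul_log_tiltSum s hp).comp_of_eq (0 : ℝ) (hasDerivAt_neg 0) neg_zero.symm)
  have hslope := le_of_hasDerivAt_of_le_mul hderiv (by simp [tiltSum_zero, hp, hq]) hkey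
  simp only [mul_neg, mul_one, sub_neg_eq_add] at hslope
  linarith

lemma div_eq_sq_mul_exp {a u : ℝ} (ha : 0 ≤ a) (hu : 0 < u) :
    a / u = a ^ 2 * exp (-((log (a ^ 2) + 2 * log u) / 2)) := by
  rcases ha.eq_or_lt with rfl | ha
  · simp
  have h : -((log (a ^ 2) + 2 * log u) / 2) = -log (a * u) := by
    rw [log_pow, log_mul ha.ne' hu.ne']; push_cast; ring
  rw [h, exp_neg, exp_log (by positivity)]
  field_simp

section Partition

variable {H : Type*} [NormedAddCommGroup H] [InnerProductSpace ℂ H] [CompleteSpace H]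
  {I J : Type*} [Fintype I] [Fintype J] {ρ : I → H →L[ℂ] H} {τ : J → H →L[ℂ] H}

lemma sum_adjoint_apply_apply (hρ : ∑ i, (adjoint (ρ i)).comp (ρ i) = 1) (x : H) :
    ∑ i, adjoint (ρ i) (ρ i x) = x := by
  simpa using congr($hρ x)

lemma sum_norm_apply_sq (hρ : ∑ i, (adjoint (ρ i)).comp (ρ i) = 1) (x : H) :
    ∑ i, ‖ρ i x‖ ^ 2 = ‖x‖ ^ 2 := by
  have h := congr(RCLike.re ⟪x, $(sum_adjoint_apply_apply hρ x)⟫_ℂ)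
  simpa only [inner_sum, map_sum, adjoint_inner_right, inner_self_eq_norm_sq] using h

lemma norm_sum_adjoint_apply_le (hρ : ∑ i, (adjoint (ρ i)).comp (ρ i) = 1) (Φ : I → H) :
    ‖∑ i, adjoint (ρ i) (Φ i)‖ ≤ √(∑ i, ‖Φ i‖ ^ 2) := by
  set u := ∑ i, adjoint (ρ i) (Φ i)
  have h : ‖u‖ ^ 2 ≤ ‖u‖ * √(∑ i, ‖Φ i‖ ^ 2) :=
    calc ‖u‖ ^ 2 = ∑ i, RCLike.re ⟪ρ i u, Φ i⟫_ℂ := by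
          rw [← inner_self_eq_norm_sq (𝕜 := ℂ)]
          simp only [u, inner_sum, map_sum, adjoint_inner_right]
      _ ≤ ∑ i, ‖ρ i u‖ * ‖Φ i‖ :=
          sum_le_sum fun i _ => (RCLike.re_le_norm _).trans (norm_inner_le_norm _ _)
      _ ≤ √(∑ i, ‖ρ i u‖ ^ 2) * √(∑ i, ‖Φ i‖ ^ 2) := sum_mul_le_sqrt_mul_sqrt _ _ _
      _ = ‖u‖ * √(∑ i, ‖Φ i‖ ^ 2) := by rw [sum_norm_apply_sq hρ, sqrt_sq (norm_nonneg u)]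
  rcases (norm_nonneg u).eq_or_lt with hu | hu
  · rw [← hu]; positivity
  · nlinarith

/-- The block operator `(τ j ∘ (ρ i)†)` is a contraction `ℓ²(I; H) → ℓ²(J; H)`. -/
lemma norm_sum_sum_inner_le (hρ : ∑ i, (adjoint (ρ i)).comp (ρ i) = 1)
    (hτ : ∑ j, (adjoint (τ j)).comp (τ j) = 1) (x : I → H) (y : J → H) :
    ‖∑ i, ∑ j, ⟪y j, τ j (adjoint (ρ i) (x i))⟫_ℂ‖ ≤ √(∑ i, ‖x i‖ ^ 2) * √(∑ j, ‖y j‖ ^ 2) := by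
  set u := ∑ i, adjoint (ρ i) (x i)
  calc ‖∑ i, ∑ j, ⟪y j, τ j (adjoint (ρ i) (x i))⟫_ℂ‖ = ‖∑ j, ⟪y j, τ j u⟫_ℂ‖ := by
        simp only [u, map_sum, inner_sum]; rw [sum_comm]
    _ ≤ ∑ j, ‖τ j u‖ * ‖y j‖ :=
        (norm_sum_le _ _).trans
          (sum_le_sum fun j _ => (norm_inner_le_norm _ _).trans_eq (mul_comm _ _))
    _ ≤ √(∑ j, ‖τ j u‖ ^ 2) * √(∑ j, ‖y j‖ ^ 2) := sum_mul_le_sqrt_mul_sqrt _ _ _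
    _ ≤ √(∑ i, ‖x i‖ ^ 2) * √(∑ j, ‖y j‖ ^ 2) := by
        rw [sum_norm_apply_sq hτ, sqrt_sq (norm_nonneg u)]
        gcongr
        exact norm_sum_adjoint_apply_le hρ x

lemma norm_sum_sum_mul_inner_le (hρ : ∑ i, (adjoint (ρ i)).comp (ρ i) = 1)
    (hτ : ∑ j, (adjoint (τ j)).comp (τ j) = 1) (ψ : H) (a : I → ℂ) (b : J → ℂ) :
    ‖∑ i, ∑ j, a i * b j * ⟪τ j ψ, τ j (adjoint (ρ i) (ρ i ψ))⟫_ℂ‖ ≤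
      √(∑ i, ‖a i‖ ^ 2 * ‖ρ i ψ‖ ^ 2) * √(∑ j, ‖b j‖ ^ 2 * ‖τ j ψ‖ ^ 2) := by
  have h := norm_sum_sum_inner_le hρ hτ (fun i => a i • ρ i ψ) (fun j => star (b j) • τ j ψ)
  simp only [norm_smul, mul_pow, map_smul, inner_smul_left, inner_smul_right, norm_star] at h
  convert h using 4
  simp only [starRingEnd_apply, star_star]
  ring

lemma sum_inner_apply_adjoint_apply (hρ : ∑ i, (adjoint (ρ i)).comp (ρ i) = 1) (T : H →L[ℂ] H)
    (x : H) : ∑ i, ⟪T x, T (adjoint (ρ i) (ρ i x))⟫_ℂ = (‖T x‖ ^ 2 : ℝ) := by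
  rw [← inner_sum, ← map_sum, sum_adjoint_apply_apply hρ, inner_self_eq_norm_sq_to_K]
  push_cast; rfl

lemma norm_inner_apply_comp_adjoint_apply_le {R T : H →L[ℂ] H} {x : H} {c v w : ℝ}
    (hv : 0 < v) (hw : 0 < w) (hc : v * w * ‖T.comp (adjoint R)‖ ≤ c) :
    ‖⟪T x, T (adjoint R (R x))⟫_ℂ‖ ≤
      c * (‖R x‖ ^ 2 * exp (-((log (‖R x‖ ^ 2) + 2 * log v) / 2))) *
        (‖T x‖ ^ 2 * exp (-((log (‖T x‖ ^ 2) + 2 * log w) / 2))) := by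
  rw [← div_eq_sq_mul_exp (norm_nonneg _) hv, ← div_eq_sq_mul_exp (norm_nonneg _) hw]
  calc ‖⟪T x, T (adjoint R (R x))⟫_ℂ‖ ≤ ‖T x‖ * (‖T.comp (adjoint R)‖ * ‖R x‖) :=
        (norm_inner_le_norm _ _).trans (by gcongr; exact le_opNorm (T.comp (adjoint R)) _)
    _ ≤ ‖T x‖ * (c / (v * w) * ‖R x‖) := by
        gcongr; rw [le_div_iff₀ (by positivity), mul_comm]; exact hc
    _ = c * (‖R x‖ / v) * (‖T x‖ / w) := by field_simp

end Partition

lemma sum_eta_sub_two_mul_sum_mul_log {ι : Type*} [Fintype ι] (r u : ι → ℝ) :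
    ∑ i, eta (r i) - 2 * ∑ i, r i * log (u i) = -∑ i, r i * (log (r i) + 2 * log (u i)) := by
  simp only [eta, mul_sum, ← sum_neg_distrib, ← sum_sub_distrib]
  exact sum_congr rfl fun i _ => by ring

theorem entropic_uncertainty_weighted_partition_general
    {H : Type*} [NormedAddCommGroup H] [InnerProductSpace ℂ H] [CompleteSpace H]
    {I J : Type*} [Fintype I] [Fintype J]
    (ρ : I → H →L[ℂ] H) (τ : J → H →L[ℂ] H)
    (hρ : ∑ i, (ContinuousLinearMap.adjoint (ρ i)).comp (ρ i) = 1)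
    (hτ : ∑ j, (ContinuousLinearMap.adjoint (τ j)).comp (τ j) = 1)
    (v : I → ℝ) (w : J → ℝ) (hv : ∀ i, 0 < v i) (hw : ∀ j, 0 < w j)
    (ψ : H) (hψ : ‖ψ‖ = 1) :
    ((∑ i, eta (‖ρ i ψ‖ ^ 2)) - 2 * ∑ i, ‖ρ i ψ‖ ^ 2 * Real.log (v i)) +
      ((∑ j, eta (‖τ j ψ‖ ^ 2)) - 2 * ∑ j, ‖τ j ψ‖ ^ 2 * Real.log (w j)) ≥
      -2 * Real.log (⨆ p : I × J,
        v p.1 * w p.2 * ‖(τ p.2).comp (ContinuousLinearMap.adjoint (ρ p.1))‖) := by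
  set c := ⨆ p : I × J, v p.1 * w p.2 * ‖(τ p.2).comp (adjoint (ρ p.1))‖
  have hc_ge (i : I) (j : J) : v i * w j * ‖(τ j).comp (adjoint (ρ i))‖ ≤ c :=
    le_ciSup (f := fun p : I × J => v p.1 * w p.2 * ‖(τ p.2).comp (adjoint (ρ p.1))‖)
      (Set.finite_range _).bddAbove (i, j)
  have hc : 0 ≤ c := Real.iSup_nonneg fun p =>
    mul_nonneg (mul_pos (hv p.1) (hw p.2)).le (norm_nonneg _)
  rw [ge_iff_le, sum_eta_sub_two_mul_sum_mul_log, sum_eta_sub_two_mul_sum_mul_log]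
  have := sum_mul_add_sum_mul_le_two_mul_log (fun i j => ⟪τ j ψ, τ j (adjoint (ρ i) (ρ i ψ))⟫_ℂ)
    _ (fun i => log (‖ρ i ψ‖ ^ 2) + 2 * log (v i)) _ (fun j => log (‖τ j ψ‖ ^ 2) + 2 * log (w j))
    (fun _ => sq_nonneg _) (fun _ => sq_nonneg _) (by rw [sum_norm_apply_sq hρ, hψ, one_pow])
    (by rw [sum_norm_apply_sq hτ, hψ, one_pow]) hc
    (fun j => sum_inner_apply_adjoint_apply hρ (τ j) ψ) (norm_sum_sum_mul_inner_le hρ hτ ψ)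
    (fun i j => norm_inner_apply_comp_adjoint_apply_le (hv i) (hw j) (hc_ge i j))
  linarith

/-- **Entropic uncertainty principle for weighted quantum partitions.**
If `{ρ_i}` and `{τ_j}` are quantum partitions of unity on a complex Hilbert
space and `{v_i}`, `{w_j}` are positive weights, then for every unit vector
`ψ`, the pressures satisfy
`p(ψ,ρ,v) + p(ψ,τ,w) ≥ -2 log (max_{i,j} v_i w_j ‖τ_j ρ_i*‖)`. -/
theorem entropic_uncertainty_weighted_partition
    {H : Type*} [NormedAddCommGroup H] [InnerProductSpace ℂ H] [CompleteSpace H]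
    {I J : Type*} [Fintype I] [Fintype J] [Nonempty I] [Nonempty J]
    (ρ : I → H →L[ℂ] H) (τ : J → H →L[ℂ] H)
    (hρ : ∑ i, (ContinuousLinearMap.adjoint (ρ i)).comp (ρ i) = 1)
    (hτ : ∑ j, (ContinuousLinearMap.adjoint (τ j)).comp (τ j) = 1)
    (v : I → ℝ) (w : J → ℝ) (hv : ∀ i, 0 < v i) (hw : ∀ j, 0 < w j)
    (ψ : H) (hψ : ‖ψ‖ = 1) :
    ((∑ i, eta (‖ρ i ψ‖ ^ 2)) - 2 * ∑ i, ‖ρ i ψ‖ ^ 2 * Real.log (v i)) +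
      ((∑ j, eta (‖τ j ψ‖ ^ 2)) - 2 * ∑ j, ‖τ j ψ‖ ^ 2 * Real.log (w j)) ≥
      -2 * Real.log (⨆ p : I × J,
        v p.1 * w p.2 * ‖(τ p.2).comp (ContinuousLinearMap.adjoint (ρ p.1))‖) :=
  entropic_uncertainty_weighted_partition_general ρ τ hρ hτ v w hv hw ψ hψ
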